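/- Under (A1) and (A2), the pointwise limit u* of the iterates u_0 := ψ_2, u_n := T u_{n−1} satisfies T u*(i) ≥ u*(i) for all i ∈ S. -/

import Mathlib

open MeasureTheory Filter Topology

noncomputable section

variable {U V : Type}

/-- Integrated reward rate `r̃(i,μ,ν)`. -/
def rT [MeasurableSpace U] [MeasurableSpace V] (r : ℕ → U → V → ℝ) (i : ℕ)
    (μ : ProbabilityMeasure U) (ν : ProbabilityMeasure V) : ℝ :=
  ∫ b, (∫ a, r i a b ∂(μ : Measure U)) ∂(ν : Measure V)

/-- Integrated transition rate `q̃(j|i,μ,ν)`. -/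
def qT [MeasurableSpace U] [MeasurableSpace V] (q : ℕ → ℕ → U → V → ℝ) (i j : ℕ)
    (μ : ProbabilityMeasure U) (ν : ProbabilityMeasure V) : ℝ :=
  ∫ b, (∫ a, q i j a b ∂(μ : Measure U)) ∂(ν : Measure V)

/-- `p̃(j|i,μ,ν) = q̃(j|i,μ,ν)/(q(i)+1) + δ_{ij}`. -/
def pT [MeasurableSpace U] [MeasurableSpace V] (q : ℕ → ℕ → U → V → ℝ) (qb : ℕ → ℝ)
    (i j : ℕ) (μ : ProbabilityMeasure U) (ν : ProbabilityMeasure V) : ℝ :=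
  qT q i j μ ν / (qb i + 1) + (if i = j then (1 : ℝ) else 0)

/-- `H_α(i,φ)`. -/
def Hop [MeasurableSpace U] [MeasurableSpace V] (q : ℕ → ℕ → U → V → ℝ)
    (r : ℕ → U → V → ℝ) (φ : ℕ → ℝ) (i : ℕ) : ℝ :=
  ⨅ μ : ProbabilityMeasure U, ⨆ ν : ProbabilityMeasure V,
    (rT r i μ ν + ∑' j, qT q i j μ ν * φ j)

/-- `I_α(i,φ)`. -/
def Iop [MeasurableSpace U] [MeasurableSpace V] (q : ℕ → ℕ → U → V → ℝ)
    (r : ℕ → U → V → ℝ) (qb : ℕ → ℝ) (α : ℝ) (φ : ℕ → ℝ) (i : ℕ) : ℝ :=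
  ⨅ μ : ProbabilityMeasure U, ⨆ ν : ProbabilityMeasure V,
    (rT r i μ ν / (α + qb i + 1) +
      ((qb i + 1) / (α + qb i + 1)) * ∑' j, pT q qb i j μ ν * φ j)

/-- The operator `T`. -/
def Tmap [MeasurableSpace U] [MeasurableSpace V] (q : ℕ → ℕ → U → V → ℝ)
    (r : ℕ → U → V → ℝ) (qb : ℕ → ℝ) (α : ℝ) (ψ₁ ψ₂ : ℕ → ℝ)
    (φ : ℕ → ℝ) (i : ℕ) : ℝ :=
  min (max (Iop q r qb α φ i) (ψ₂ i)) (ψ₁ i)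

/-- The space `B_W(S)` of nonnegative functions with finite weighted sup-norm. -/
def BW (W : ℕ → ℝ) : Set (ℕ → ℝ) :=
  {f | (∀ i, 0 ≤ f i) ∧ BddAbove (Set.range fun i => f i / W i)}

/-- The weighted sup-norm `‖f‖_W`. -/
def normW (W : ℕ → ℝ) (f : ℕ → ℝ) : ℝ := ⨆ i, f i / W i

/-- Basic properties of the transition rates: nonnegativity off the diagonal,
conservativeness and stability (`qb i` is the least upper bound `q(i)`). -/
structure RateHyps (q : ℕ → ℕ → U → V → ℝ) (qb : ℕ → ℝ) : Prop where
  off_nonneg : ∀ i j a b, j ≠ i → 0 ≤ q i j a b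
  summable : ∀ i a b, Summable fun j => q i j a b
  conservative : ∀ i a b, ∑' j, q i j a b = 0
  stable : ∀ i, IsLUB (Set.range fun ab : U × V =>
    ∑' j, if j = i then (0 : ℝ) else q i j ab.1 ab.2) (qb i)

/-- Assumption (A1) (with `w 0, …, w (N-1)` playing the role of `w_1, …, w_N`,
and `W = w_1 + ⋯ + w_N`). -/
structure A1Hyps (q : ℕ → ℕ → U → V → ℝ) (qb : ℕ → ℝ) (N : ℕ) (w : ℕ → ℕ → ℝ)
    (c : ℝ) (W : ℕ → ℝ) : Prop where
  N_pos : 0 < N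
  c_pos : 0 < c
  w_nonneg : ∀ n i, 0 ≤ w n i
  w_summable : ∀ n, n < N → ∀ i a b, Summable fun j => q i j a b * w n j
  w_rec : ∀ n, n + 1 < N → ∀ i a b, ∑' j, q i j a b * w n j ≤ w (n + 1) i
  w_last : ∀ i a b, ∑' j, q i j a b * w (N - 1) j ≤ 0
  qb_le : ∀ i, qb i ≤ c * W i
  W_def : ∀ i, W i = ∑ n ∈ Finset.range N, w n i
  W_pos : ∀ i, 0 < W i

/-- Assumption (A2), parts (ii)-(iv) concerning `r` and `q`
(compactness of `U` and `V` is imposed through instance arguments). -/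
structure A2Hyps [TopologicalSpace U] [TopologicalSpace V] (q : ℕ → ℕ → U → V → ℝ)
    (r : ℕ → U → V → ℝ) (W : ℕ → ℝ) (M : ℝ) : Prop where
  r_nonneg : ∀ i a b, 0 ≤ r i a b
  r_cont : ∀ i, Continuous fun ab : U × V => r i ab.1 ab.2
  q_cont : ∀ i j, Continuous fun ab : U × V => q i j ab.1 ab.2
  qW_cont : ∀ i, Continuous fun ab : U × V => ∑' j, q i j ab.1 ab.2 * W j
  r_le : ∀ i a b, r i a b ≤ M * W i

/-- Assumption (A2), part (iv) concerning the stopped pay-off functions. -/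
structure PsiHyps (ψ₁ ψ₂ : ℕ → ℝ) (W : ℕ → ℝ) (M : ℝ) : Prop where
  ψ₂_nonneg : ∀ i, 0 ≤ ψ₂ i
  ψ₁_le : ∀ i, ψ₁ i ≤ M * W i
  ψ₂_lt_ψ₁ : ∀ i, ψ₂ i < ψ₁ i

end

/-!
Pointwise, `p(j|i,a,b) = q(j|i,a,b)/(q(i)+1) + δᵢⱼ` is a nonnegative kernel (stability gives
`-q(i|i,a,b) ≤ q(i)`), and telescoping (A1) gives `∑ⱼ q(j|i,a,b) W(j) ≤ W(i)`, hence
`∑ⱼ p(j|i,a,b) W(j) ≤ 2 W(i)`. Integrating against `ν ⊗ μ` transfers both facts to `p̃`,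
so all series in `I_α(i, φ)` converge and are bounded uniformly in `(μ, ν)` whenever `0 ≤ φ ≤ K W`; on such functions `T` is therefore monotone.
The iterates then increase, stay between `ψ₂` and `ψ₁ ≤ M W`, and `u_{n+1} = T u_n ≤ T u*`;
letting `n → ∞` gives `u* ≤ T u*`.
-/

section ProbabilityIntegral

variable {X : Type*} [MeasurableSpace X] {ρ : Measure X} [IsProbabilityMeasure ρ]

lemma integral_le_of_forall_le {f : X → ℝ} (hf : Integrable f ρ) {C : ℝ} (h : ∀ x, f x ≤ C) :
    ∫ x, f x ∂ρ ≤ C :=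
  (integral_mono hf (integrable_const C) h).trans_eq (by simp)

lemma sum_integral_le_of_forall_sum_le {ι : Type*} {g : ι → X → ℝ}
    (hg : ∀ j, Integrable (g j) ρ) {C : ℝ} (h : ∀ s x, ∑ j ∈ s, g j x ≤ C) (s : Finset ι) :
    ∑ j ∈ s, ∫ x, g j x ∂ρ ≤ C := by
  rw [← integral_finsetSum s fun j _ => hg j]
  exact integral_le_of_forall_le (integrable_finsetSum s fun j _ => hg j) (h s)

end ProbabilityIntegral

lemma Continuous.integrable_of_compactSpace {X : Type*} [TopologicalSpace X] [CompactSpace X]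
    [MeasurableSpace X] [OpensMeasurableSpace X] {ρ : Measure X} [IsFiniteMeasure ρ]
    {f : X → ℝ} (hf : Continuous f) : Integrable f ρ :=
  hf.integrable_of_hasCompactSupport (HasCompactSupport.of_compactSpace f)

lemma integral_integral_eq_integral_prod {U V : Type} [MetricSpace U] [CompactSpace U]
    [MeasurableSpace U] [BorelSpace U] [MetricSpace V] [CompactSpace V]
    [MeasurableSpace V] [BorelSpace V] (μ : ProbabilityMeasure U) (ν : ProbabilityMeasure V)
    {f : U → V → ℝ} (hf : Continuous fun ab : U × V => f ab.1 ab.2) :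
    ∫ b, ∫ a, f a b ∂(μ : Measure U) ∂(ν : Measure V)
      = ∫ p, f p.2 p.1 ∂((ν : Measure V).prod (μ : Measure U)) :=
  (integral_prod _ (hf.comp continuous_swap).integrable_of_compactSpace).symm

section Rates

variable {U V : Type} {q : ℕ → ℕ → U → V → ℝ} {qb : ℕ → ℝ}

lemma RateHyps.offDiag_nonneg (hrate : RateHyps q qb) (i : ℕ) (a : U) (b : V) (j : ℕ) :
    0 ≤ if j = i then (0 : ℝ) else q i j a b := by
  split_ifs with h
  exacts [le_rfl, hrate.off_nonneg i j a b h]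

lemma RateHyps.qb_nonneg (hrate : RateHyps q qb) (i : ℕ) : 0 ≤ qb i := by
  obtain ⟨_, ab, rfl⟩ := (hrate.stable i).nonempty
  exact (tsum_nonneg (hrate.offDiag_nonneg i ab.1 ab.2)).trans ((hrate.stable i).1 ⟨ab, rfl⟩)

lemma RateHyps.neg_diag_le (hrate : RateHyps q qb) (i : ℕ) (a : U) (b : V) :
    -q i i a b ≤ qb i := by
  have h := (hrate.summable i a b).tsum_eq_add_tsum_ite i
  rw [hrate.conservative i a b] at h
  linarith [(hrate.stable i).1 ⟨(a, b), rfl⟩]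

variable {N : ℕ} {w : ℕ → ℕ → ℝ} {c : ℝ} {W : ℕ → ℝ}

lemma A1Hyps.summable_mul_W (hA1 : A1Hyps q qb N w c W) (i : ℕ) (a : U) (b : V) :
    Summable fun j => q i j a b * W j := by
  simp_rw [hA1.W_def, Finset.mul_sum]
  exact summable_sum fun n hn => hA1.w_summable n (Finset.mem_range.mp hn) i a b

/-- Summing the chain of inequalities of (A1) telescopes. -/
lemma A1Hyps.tsum_mul_W_le (hA1 : A1Hyps q qb N w c W) (i : ℕ) (a : U) (b : V) :
    ∑' j, q i j a b * W j ≤ W i := by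
  obtain ⟨K, rfl⟩ : ∃ K, N = K + 1 := ⟨N - 1, by have := hA1.N_pos; omega⟩
  have hrec : ∑ n ∈ Finset.range K, ∑' j, q i j a b * w n j
      ≤ ∑ n ∈ Finset.range K, w (n + 1) i :=
    Finset.sum_le_sum fun n hn => hA1.w_rec n (by simp at hn; omega) i a b
  have hlast : ∑' j, q i j a b * w K j ≤ 0 := hA1.w_last i a b
  simp_rw [hA1.W_def, Finset.mul_sum]
  rw [Summable.tsum_finsetSum fun n hn => hA1.w_summable n (Finset.mem_range.mp hn) i a b,
    Finset.sum_range_succ, Finset.sum_range_succ' (fun n => w n i)]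
  linarith [hA1.w_nonneg 0 i]

end Rates

section Uniformized

variable {U V : Type} {q : ℕ → ℕ → U → V → ℝ} {qb : ℕ → ℝ}
  {N : ℕ} {w : ℕ → ℕ → ℝ} {c : ℝ} {W : ℕ → ℝ}

/-- The integrand of `pT`: transition probabilities of the uniformized chain. -/
noncomputable def unifProb (q : ℕ → ℕ → U → V → ℝ) (qb : ℕ → ℝ) (i j : ℕ) (a : U) (b : V) : ℝ :=
  q i j a b / (qb i + 1) + if i = j then 1 else 0

lemma unifProb_nonneg (hrate : RateHyps q qb) (i j : ℕ) (a : U) (b : V) :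
    0 ≤ unifProb q qb i j a b := by
  have hqb := hrate.qb_nonneg i
  rw [unifProb]
  split_ifs with h
  · subst h
    rw [div_add_one (by positivity), le_div_iff₀ (by positivity)]
    linarith [hrate.neg_diag_le i a b]
  · simpa using div_nonneg (hrate.off_nonneg i j a b (Ne.symm h)) (by positivity)

lemma unifProb_mul_W_eq (i : ℕ) (a : U) (b : V) :
    (fun j => unifProb q qb i j a b * W j)
      = fun j => q i j a b * W j / (qb i + 1) + if j = i then W i else 0 := by
  funext j
  by_cases h : j = i
  · subst h; simp [unifProb]; ring
  · simp [unifProb, h, Ne.symm h]; ring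

lemma sum_unifProb_mul_W_le (hrate : RateHyps q qb) (hA1 : A1Hyps q qb N w c W)
    (i : ℕ) (a : U) (b : V) (s : Finset ℕ) :
    ∑ j ∈ s, unifProb q qb i j a b * W j ≤ 2 * W i := by
  have hqb := hrate.qb_nonneg i
  have hWi := (hA1.W_pos i).le
  have hsummable : Summable fun j => unifProb q qb i j a b * W j := by
    rw [unifProb_mul_W_eq]
    exact ((hA1.summable_mul_W i a b).div_const _).add (summable_of_ne_finset_zero
      (s := {i}) fun j hj => by simp_all)
  have htsum : ∑' j, unifProb q qb i j a b * W j ≤ 2 * W i := by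
    rw [unifProb_mul_W_eq, Summable.tsum_add ((hA1.summable_mul_W i a b).div_const _)
      (summable_of_ne_finset_zero (s := {i}) fun j hj => by simp_all), tsum_div_const,
      tsum_ite_eq]
    have : (∑' j, q i j a b * W j) / (qb i + 1) ≤ W i :=
      div_le_of_le_mul₀ (by positivity) hWi (by nlinarith [hA1.tsum_mul_W_le i a b])
    linarith
  refine le_trans (hsummable.sum_le_tsum s fun j _ => ?_) htsum
  exact mul_nonneg (unifProb_nonneg hrate i j a b) (hA1.W_pos j).le

end Uniformized

section Integrated

variable {U V : Type} [MetricSpace U] [CompactSpace U] [MeasurableSpace U] [BorelSpace U]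
  [MetricSpace V] [CompactSpace V] [MeasurableSpace V] [BorelSpace V]
  {q : ℕ → ℕ → U → V → ℝ} {r : ℕ → U → V → ℝ} {qb : ℕ → ℝ}
  {N : ℕ} {w : ℕ → ℕ → ℝ} {c : ℝ} {W : ℕ → ℝ} {M : ℝ}

lemma rT_le (hA2 : A2Hyps q r W M) (i : ℕ)
    (μ : ProbabilityMeasure U) (ν : ProbabilityMeasure V) : rT r i μ ν ≤ M * W i := by
  rw [rT, integral_integral_eq_integral_prod μ ν (hA2.r_cont i)]
  exact integral_le_of_forall_le ((hA2.r_cont i).comp continuous_swap).integrable_of_compactSpace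
    fun p => hA2.r_le i p.2 p.1

lemma pT_eq_integral (hA2 : A2Hyps q r W M) (i j : ℕ)
    (μ : ProbabilityMeasure U) (ν : ProbabilityMeasure V) :
    pT q qb i j μ ν = ∫ p, unifProb q qb i j p.2 p.1 ∂((ν : Measure V).prod (μ : Measure U)) := by
  have hq : Integrable (fun p : V × U => q i j p.2 p.1 / (qb i + 1))
      ((ν : Measure V).prod (μ : Measure U)) :=
    (((hA2.q_cont i j).comp continuous_swap).div_const _).integrable_of_compactSpace
  rw [pT, qT, integral_integral_eq_integral_prod μ ν (hA2.q_cont i j)]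
  simp only [unifProb]
  rw [integral_add hq (integrable_const _), integral_div]
  simp

lemma pT_nonneg (hrate : RateHyps q qb) (hA2 : A2Hyps q r W M) (i j : ℕ)
    (μ : ProbabilityMeasure U) (ν : ProbabilityMeasure V) : 0 ≤ pT q qb i j μ ν := by
  rw [pT_eq_integral hA2]
  exact integral_nonneg fun p => unifProb_nonneg hrate i j p.2 p.1

lemma sum_pT_mul_W_le (hrate : RateHyps q qb) (hA1 : A1Hyps q qb N w c W)
    (hA2 : A2Hyps q r W M) (i : ℕ) (μ : ProbabilityMeasure U) (ν : ProbabilityMeasure V)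
    (s : Finset ℕ) : ∑ j ∈ s, pT q qb i j μ ν * W j ≤ 2 * W i := by
  simp_rw [pT_eq_integral hA2, ← integral_mul_const]
  refine sum_integral_le_of_forall_sum_le (fun j => ?_)
    (fun s p => sum_unifProb_mul_W_le hrate hA1 i p.2 p.1 s) s
  exact ((((hA2.q_cont i j).comp continuous_swap).div_const _).add continuous_const).mul
    continuous_const |>.integrable_of_compactSpace

variable {φ : ℕ → ℝ} {K : ℝ}

lemma summable_pT_mul (hrate : RateHyps q qb) (hA1 : A1Hyps q qb N w c W)
    (hA2 : A2Hyps q r W M) (i : ℕ) (μ : ProbabilityMeasure U) (ν : ProbabilityMeasure V)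
    (hφ : 0 ≤ φ) (hφK : ∀ j, φ j ≤ K * W j) : Summable fun j => pT q qb i j μ ν * φ j := by
  have hW : Summable fun j => pT q qb i j μ ν * W j :=
    summable_of_sum_le (fun j => mul_nonneg (pT_nonneg hrate hA2 i j μ ν) (hA1.W_pos j).le)
      (sum_pT_mul_W_le hrate hA1 hA2 i μ ν)
  refine (hW.mul_left K).of_nonneg_of_le
    (fun j => mul_nonneg (pT_nonneg hrate hA2 i j μ ν) (hφ j)) fun j => ?_
  rw [mul_left_comm]
  exact mul_le_mul_of_nonneg_left (hφK j) (pT_nonneg hrate hA2 i j μ ν)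

lemma tsum_pT_mul_le (hrate : RateHyps q qb) (hA1 : A1Hyps q qb N w c W)
    (hA2 : A2Hyps q r W M) (i : ℕ) (μ : ProbabilityMeasure U) (ν : ProbabilityMeasure V)
    (hφ : 0 ≤ φ) (hφK : ∀ j, φ j ≤ K * W j) : ∑' j, pT q qb i j μ ν * φ j ≤ K * (2 * W i) := by
  have hK : 0 ≤ K := nonneg_of_mul_nonneg_left ((hφ 0).trans (hφK 0)) (hA1.W_pos 0)
  refine Real.tsum_le_of_sum_le (fun j => mul_nonneg (pT_nonneg hrate hA2 i j μ ν) (hφ j))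
    fun s => ?_
  calc ∑ j ∈ s, pT q qb i j μ ν * φ j ≤ ∑ j ∈ s, K * (pT q qb i j μ ν * W j) :=
        Finset.sum_le_sum fun j _ => by
          rw [mul_left_comm]
          exact mul_le_mul_of_nonneg_left (hφK j) (pT_nonneg hrate hA2 i j μ ν)
    _ ≤ K * (2 * W i) := by
        rw [← Finset.mul_sum]
        exact mul_le_mul_of_nonneg_left (sum_pT_mul_W_le hrate hA1 hA2 i μ ν s) hK

end Integrated

lemma iInf_iSup_mono_of_nonneg {ι κ : Sort*} {f g : ι → κ → ℝ} (hf : ∀ x y, 0 ≤ f x y)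
    (hg : ∀ x, BddAbove (Set.range (g x))) (hfg : ∀ x y, f x y ≤ g x y) :
    ⨅ x, ⨆ y, f x y ≤ ⨅ x, ⨆ y, g x y :=
  ciInf_mono ⟨0, by rintro _ ⟨x, rfl⟩; exact Real.iSup_nonneg (hf x)⟩
    fun x => ciSup_mono (hg x) (hfg x)

section Operators

variable {U V : Type} [MetricSpace U] [CompactSpace U] [MeasurableSpace U] [BorelSpace U]
  [MetricSpace V] [CompactSpace V] [MeasurableSpace V] [BorelSpace V]
  {q : ℕ → ℕ → U → V → ℝ} {r : ℕ → U → V → ℝ} {qb : ℕ → ℝ}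
  {N : ℕ} {w : ℕ → ℕ → ℝ} {c : ℝ} {W : ℕ → ℝ} {M α K : ℝ} {φ φ' : ℕ → ℝ}

lemma Iop_mono (hrate : RateHyps q qb) (hA1 : A1Hyps q qb N w c W) (hA2 : A2Hyps q r W M)
    (hα : 0 < α) (hφ : 0 ≤ φ) (hφφ' : φ ≤ φ') (hφ'K : ∀ j, φ' j ≤ K * W j) (i : ℕ) :
    Iop q r qb α φ i ≤ Iop q r qb α φ' i := by
  have hqb := hrate.qb_nonneg i
  have hφ' : 0 ≤ φ' := hφ.trans hφφ'
  have hφK j : φ j ≤ K * W j := (hφφ' j).trans (hφ'K j)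
  have hpT j μ ν := pT_nonneg (W := W) hrate hA2 i j μ ν
  apply iInf_iSup_mono_of_nonneg
  · intro μ ν
    have hr : 0 ≤ rT r i μ ν :=
      integral_nonneg fun b => integral_nonneg fun a => hA2.r_nonneg i a b
    have hsum : 0 ≤ ∑' j, pT q qb i j μ ν * φ j :=
      tsum_nonneg fun j => mul_nonneg (hpT j μ ν) (hφ j)
    positivity
  · intro μ
    refine ⟨M * W i / (α + qb i + 1) + (qb i + 1) / (α + qb i + 1) * (K * (2 * W i)), ?_⟩
    rintro _ ⟨ν, rfl⟩
    have hr := rT_le hA2 i μ ν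
    have hsum := tsum_pT_mul_le hrate hA1 hA2 i μ ν hφ' hφ'K
    dsimp only
    gcongr
  · intro μ ν
    have hsum := (summable_pT_mul hrate hA1 hA2 i μ ν hφ hφK).tsum_le_tsum
      (fun j => mul_le_mul_of_nonneg_left (hφφ' j) (hpT j μ ν))
      (summable_pT_mul hrate hA1 hA2 i μ ν hφ' hφ'K)
    gcongr

lemma Tmap_mono (hrate : RateHyps q qb) (hA1 : A1Hyps q qb N w c W) (hA2 : A2Hyps q r W M)
    (hα : 0 < α) (ψ₁ ψ₂ : ℕ → ℝ) (hφ : 0 ≤ φ) (hφφ' : φ ≤ φ') (hφ'K : ∀ j, φ' j ≤ K * W j) :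
    Tmap q r qb α ψ₁ ψ₂ φ ≤ Tmap q r qb α ψ₁ ψ₂ φ' := fun i =>
  min_le_min_right _ (max_le_max_right _ (Iop_mono hrate hA1 hA2 hα hφ hφφ' hφ'K i))

end Operators

lemma Tmap_mem_Icc {U V : Type} [MeasurableSpace U] [MeasurableSpace V]
    (q : ℕ → ℕ → U → V → ℝ) (r : ℕ → U → V → ℝ) (qb : ℕ → ℝ) (α : ℝ) {ψ₁ ψ₂ : ℕ → ℝ}
    (hψ : ψ₂ ≤ ψ₁) (φ : ℕ → ℝ) : Tmap q r qb α ψ₁ ψ₂ φ ∈ Set.Icc ψ₂ ψ₁ :=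
  ⟨fun i => le_min (le_max_right _ _) (hψ i), fun _ => min_le_right _ _⟩

section Iterates

variable {U V : Type} [MeasurableSpace U] [MeasurableSpace V]
  {q : ℕ → ℕ → U → V → ℝ} {r : ℕ → U → V → ℝ} {qb : ℕ → ℝ} {α : ℝ} {ψ₁ ψ₂ : ℕ → ℝ}
  {u : ℕ → ℕ → ℝ}

lemma Tmap_iterate_mem_Icc (hψ : ψ₂ ≤ ψ₁) (hu0 : u 0 = ψ₂)
    (hu : ∀ n, u (n + 1) = Tmap q r qb α ψ₁ ψ₂ (u n)) (n : ℕ) : u n ∈ Set.Icc ψ₂ ψ₁ := by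
  cases n with
  | zero => rw [hu0]; exact ⟨le_rfl, hψ⟩
  | succ n => exact hu n ▸ Tmap_mem_Icc q r qb α hψ (u n)

lemma monotone_Tmap_iterate [MetricSpace U] [CompactSpace U] [BorelSpace U]
    [MetricSpace V] [CompactSpace V] [BorelSpace V] {N : ℕ} {w : ℕ → ℕ → ℝ} {c : ℝ}
    {W : ℕ → ℝ} {M K : ℝ} (hrate : RateHyps q qb) (hA1 : A1Hyps q qb N w c W)
    (hA2 : A2Hyps q r W M) (hα : 0 < α) (hψ₂ : 0 ≤ ψ₂) (hψ : ψ₂ ≤ ψ₁)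
    (hψ₁K : ∀ j, ψ₁ j ≤ K * W j) (hu0 : u 0 = ψ₂)
    (hu : ∀ n, u (n + 1) = Tmap q r qb α ψ₁ ψ₂ (u n)) : Monotone u := by
  have hIcc := Tmap_iterate_mem_Icc hψ hu0 hu
  refine monotone_nat_of_le_succ fun n => ?_
  induction n with
  | zero => exact hu 0 ▸ hu0 ▸ (Tmap_mem_Icc q r qb α hψ ψ₂).1
  | succ n ih =>
    have := Tmap_mono hrate hA1 hA2 hα ψ₁ ψ₂ (hψ₂.trans (hIcc n).1) ih
      fun j => ((hIcc (n + 1)).2 j).trans (hψ₁K j)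
    rwa [← hu n, ← hu (n + 1)] at this

end Iterates

theorem stmt15_general {U V : Type} [MetricSpace U] [CompactSpace U]
    [MeasurableSpace U] [BorelSpace U]
    [MetricSpace V] [CompactSpace V]
    [MeasurableSpace V] [BorelSpace V]
    (q : ℕ → ℕ → U → V → ℝ) (r : ℕ → U → V → ℝ) (qb : ℕ → ℝ)
    (N : ℕ) (w : ℕ → ℕ → ℝ) (c : ℝ) (W : ℕ → ℝ) (M : ℝ) (α : ℝ) (ψ₁ ψ₂ : ℕ → ℝ)
    (hrate : RateHyps q qb) (hA1 : A1Hyps q qb N w c W)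
    (hA2 : A2Hyps q r W M) (hψ : PsiHyps ψ₁ ψ₂ W M) (hα : 0 < α) :
    ∀ u : ℕ → ℕ → ℝ, u 0 = ψ₂ → (∀ n, u (n + 1) = Tmap q r qb α ψ₁ ψ₂ (u n)) →
      ∀ ustar : ℕ → ℝ, (∀ i, Tendsto (fun n => u n i) atTop (𝓝 (ustar i))) →
        ∀ i : ℕ, ustar i ≤ Tmap q r qb α ψ₁ ψ₂ ustar i := by
  intro u hu0 hu ustar hlim i
  have hψ₂ : 0 ≤ ψ₂ := hψ.ψ₂_nonneg
  have hψ₂₁ : ψ₂ ≤ ψ₁ := fun j => (hψ.ψ₂_lt_ψ₁ j).le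
  have hIcc := Tmap_iterate_mem_Icc hψ₂₁ hu0 hu
  have hmono := monotone_Tmap_iterate hrate hA1 hA2 hα hψ₂ hψ₂₁ hψ.ψ₁_le hu0 hu
  have hu_le_star n : u n ≤ ustar := fun j =>
    (show Monotone fun n => u n j from fun _ _ hmn => hmono hmn j).ge_of_tendsto (hlim j) n
  have hstar_le j : ustar j ≤ M * W j :=
    (le_of_tendsto' (hlim j) fun n => (hIcc n).2 j).trans (hψ.ψ₁_le j)
  have hstep n : u (n + 1) i ≤ Tmap q r qb α ψ₁ ψ₂ ustar i := by
    rw [hu n]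
    exact Tmap_mono hrate hA1 hA2 hα ψ₁ ψ₂ (hψ₂.trans (hIcc n).1) (hu_le_star n)
      hstar_le i
  exact le_of_tendsto' ((hlim i).comp (tendsto_add_atTop_nat 1)) hstep

/-- The pointwise limit `u*` of the iterates satisfies `T u* ≥ u*`. -/
theorem stmt15 {U V : Type} [MetricSpace U] [CompactSpace U] [Nonempty U]
    [MeasurableSpace U] [BorelSpace U]
    [MetricSpace V] [CompactSpace V] [Nonempty V]
    [MeasurableSpace V] [BorelSpace V]
    (q : ℕ → ℕ → U → V → ℝ) (r : ℕ → U → V → ℝ) (qb : ℕ → ℝ)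
    (N : ℕ) (w : ℕ → ℕ → ℝ) (c : ℝ) (W : ℕ → ℝ) (M : ℝ) (α : ℝ) (ψ₁ ψ₂ : ℕ → ℝ)
    (hrate : RateHyps q qb) (hA1 : A1Hyps q qb N w c W)
    (hA2 : A2Hyps q r W M) (hψ : PsiHyps ψ₁ ψ₂ W M) (hα : 0 < α) :
    ∀ u : ℕ → ℕ → ℝ, u 0 = ψ₂ → (∀ n, u (n + 1) = Tmap q r qb α ψ₁ ψ₂ (u n)) →
      ∀ ustar : ℕ → ℝ, (∀ i, Tendsto (fun n => u n i) atTop (𝓝 (ustar i))) →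
        ∀ i : ℕ, ustar i ≤ Tmap q r qb α ψ₁ ψ₂ ustar i :=
  stmt15_general q r qb N w c W M α ψ₁ ψ₂ hrate hA1 hA2 hψ hα
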